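/- arXiv:1201.3474 — 2 statements merged into one kernel-verified Lean document; each statement's English description precedes it below -/
import Mathlib

section
/- Transience of the form equals transience of the semigroup: Q is transient (i.e. there is a strictly positive g ∈ ℓ¹(V,m) ∩ ℓ^∞(V) with ∑_x |u(x)| g(x) m(x) ≤ Q(u)^{1/2} for all u ∈ D(Q)) if and only if ∫₀^∞ (e^{-tL}δ_x)(y) dt < ∞ for all x,y ∈ V. -/
open scoped ENNReal NNReal BigOperators
open MeasureTheory Filter

/-- A weighted graph `(b,c)` over a vertex set `V`. -/
structure WeightedGraph (V : Type*) where
  b : V → V → ℝ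
  c : V → ℝ
  b_nonneg : ∀ x y, 0 ≤ b x y
  b_diag : ∀ x, b x x = 0
  b_symm : ∀ x y, b x y = b y x
  b_summable : ∀ x, Summable fun y => b x y
  c_nonneg : ∀ x, 0 ≤ c x

/-- Membership in `ℓ²(V,m)`. -/
def MemL2 {V : Type*} (m : V → ℝ) (u : V → ℝ) : Prop :=
  Summable fun x => u x ^ 2 * m x

/-- The inner product of `ℓ²(V,m)`. -/
noncomputable def l2inner {V : Type*} (m : V → ℝ) (u v : V → ℝ) : ℝ :=
  ∑' x, u x * v x * m x

namespace WeightedGraph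

variable {V : Type*} (G : WeightedGraph V)

/-- The energy functional `Q̃` with values in `[0,∞]`. -/
noncomputable def energy (u : V → ℝ) : ℝ≥0∞ :=
  (1 / 2) * ∑' p : V × V, ENNReal.ofReal (G.b p.1 p.2 * (u p.1 - u p.2) ^ 2)
    + ∑' x, ENNReal.ofReal (G.c x * u x ^ 2)

/-- The functions of finite energy (`D̃`). -/
def FiniteEnergy (u : V → ℝ) : Prop := G.energy u < ⊤

/-- The real-valued bilinear energy form (meaningful on functions of finite energy). -/
noncomputable def energyBilin (u v : V → ℝ) : ℝ :=
  (1 / 2) * ∑' p : V × V, G.b p.1 p.2 * (u p.1 - u p.2) * (v p.1 - v p.2)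
    + ∑' x, G.c x * u x * v x

/-- The generalized vertex degree. -/
noncomputable def deg (x : V) : ℝ := (∑' y, G.b x y) + G.c x

/-- The formal Laplacian `L̃` associated with `(b,c)` and the measure `m`. -/
noncomputable def formalL (m : V → ℝ) (u : V → ℝ) (x : V) : ℝ :=
  ((∑' y, G.b x y * (u x - u y)) + G.c x * u x) / m x

/-- Connectedness of the weighted graph: any two vertices are joined by a path of edges. -/
def Connected : Prop :=
  ∀ x y : V, ∃ (n : ℕ) (p : ℕ → V), p 0 = x ∧ p n = y ∧ ∀ i < n, 0 < G.b (p i) (p (i + 1))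

/-- The squared distance of the Yamasaki space with base point `o`. -/
noncomputable def ydistSq (o : V) (u v : V → ℝ) : ℝ :=
  (G.energy (fun x => u x - v x)).toReal + (u o - v o) ^ 2

/-- The domain of the regular Dirichlet form `Q^(D)`: the closure of the finitely
supported functions in `D̃ ∩ ℓ²(V,m)` with respect to the form norm. -/
def regDom (m : V → ℝ) : Set (V → ℝ) :=
  {u | G.FiniteEnergy u ∧ MemL2 m u ∧
    ∃ f : ℕ → V → ℝ, (∀ n, (Function.support (f n)).Finite) ∧
      Filter.Tendsto
        (fun n => (G.energy (fun x => u x - f n x)).toReal + ∑' x, (u x - f n x) ^ 2 * m x)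
        Filter.atTop (nhds 0)}

/-- Transience of a Dirichlet form given by its domain: existence of a strictly positive
reference function `g ∈ ℓ¹(V,m) ∩ ℓ^∞(V)` with `⟨|u|,g⟩ ≤ Q(u)^{1/2}` on the domain. -/
def FormTransient (m : V → ℝ) (dom : Set (V → ℝ)) : Prop :=
  ∃ g : V → ℝ, (∀ x, 0 < g x) ∧ (Summable fun x => g x * m x) ∧ (∃ C, ∀ x, g x ≤ C) ∧
    ∀ u ∈ dom, ∑' x, |u x| * g x * m x ≤ Real.sqrt (G.energyBilin u u)

end WeightedGraph

/-- The data of a Dirichlet form `Q` associated with a weighted graph `(b,c)` on `ℓ²(V,m)`,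
together with its semigroup `T t = e^{-tL}` and resolvent `R α = (L+α)^{-1}`, with the
standard properties: `Q` is a restriction of `Q̃` with `D(Q^(D)) ⊆ D(Q) ⊆ D(Q^(N))`,
the semigroup is symmetric, Markovian, positivity preserving, the resolvent is characterized
by the form, and the resolvent is the Laplace transform of the semigroup. -/
structure FormSetup {V : Type*} (G : WeightedGraph V) (m : V → ℝ) where
  dom : Set (V → ℝ)
  dom_fe : ∀ u ∈ dom, G.FiniteEnergy u
  dom_l2 : ∀ u ∈ dom, MemL2 m u
  reg_sub : G.regDom m ⊆ dom
  T : ℝ → (V → ℝ) → V → ℝ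
  R : ℝ → (V → ℝ) → V → ℝ
  T_linear : ∀ t, IsLinearMap ℝ (T t)
  R_linear : ∀ α, IsLinearMap ℝ (R α)
  T_semigroup : ∀ s t : ℝ, 0 < s → 0 < t → ∀ f, T (s + t) f = T s (T t f)
  T_l2 : ∀ t : ℝ, 0 < t → ∀ f, MemL2 m f → MemL2 m (T t f)
  T_symm : ∀ t : ℝ, 0 < t → ∀ f g, MemL2 m f → MemL2 m g →
    l2inner m (T t f) g = l2inner m f (T t g)
  T_contraction : ∀ t : ℝ, 0 < t → ∀ f, MemL2 m f →
    ∑' x, T t f x ^ 2 * m x ≤ ∑' x, f x ^ 2 * m x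
  T_pos : ∀ t : ℝ, 0 < t → ∀ f, (∀ x, 0 ≤ f x) → ∀ x, 0 ≤ T t f x
  T_markov : ∀ t : ℝ, 0 < t → ∀ f, (∀ x, 0 ≤ f x ∧ f x ≤ 1) →
    ∀ x, 0 ≤ T t f x ∧ T t f x ≤ 1
  T_cont : ∀ f, MemL2 m f → ∀ x, ContinuousOn (fun t => T t f x) (Set.Ioi (0 : ℝ))
  R_mem : ∀ α : ℝ, 0 < α → ∀ f, MemL2 m f → R α f ∈ dom
  R_pos : ∀ α : ℝ, 0 < α → ∀ f, (∀ x, 0 ≤ f x) → ∀ x, 0 ≤ R α f x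
  R_char : ∀ α : ℝ, 0 < α → ∀ f, MemL2 m f → ∀ v ∈ dom,
    G.energyBilin (R α f) v + α * l2inner m (R α f) v = l2inner m f v
  R_laplace : ∀ α : ℝ, 0 < α → ∀ f, MemL2 m f → (∀ x, 0 ≤ f x) → ∀ y,
    ENNReal.ofReal (R α f y) =
      ∫⁻ t in Set.Ioi (0 : ℝ), ENNReal.ofReal (Real.exp (-α * t) * T t f y)

namespace FormSetup

variable {V : Type*} {G : WeightedGraph V} {m : V → ℝ}

open scoped Classical in
/-- The Green function `G(x,y) = ∫₀^∞ (e^{-tL} δ_x)(y) dt`, with values in `[0,∞]`. -/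
noncomputable def green (S : FormSetup G m) (x y : V) : ℝ≥0∞ :=
  ∫⁻ t in Set.Ioi (0 : ℝ), ENNReal.ofReal (S.T t (fun z => if z = x then 1 else 0) y)

/-- The extended Dirichlet space `D(Q)_e`: functions which are pointwise limits of
`Q`-Cauchy sequences from `D(Q)`. -/
def extDom (S : FormSetup G m) : Set (V → ℝ) :=
  {u | ∃ f : ℕ → V → ℝ, (∀ n, f n ∈ S.dom) ∧
    (∀ ε > (0 : ℝ), ∃ N, ∀ p ≥ N, ∀ q ≥ N,
      G.energyBilin (fun x => f p x - f q x) (fun x => f p x - f q x) < ε) ∧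
    ∀ x, Filter.Tendsto (fun n => f n x) Filter.atTop (nhds (u x))}

/-- Stochastic completeness: the resolvent `(L+1)^{-1}`, extended to `ℓ^∞(V)` by monotone
limits, maps the constant function `1` to `1`. -/
def StochComplete (S : FormSetup G m) : Prop :=
  ∀ f : ℕ → V → ℝ, (∀ n, MemL2 m (f n)) →
    (∀ n x, 0 ≤ f n x ∧ f n x ≤ f (n + 1) x ∧ f n x ≤ 1) →
    (∀ x, Filter.Tendsto (fun n => f n x) Filter.atTop (nhds 1)) →
    ∀ x, Filter.Tendsto (fun n => S.R 1 (f n) x) Filter.atTop (nhds 1)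

end FormSetup

/-!
The resolvent `R_α δ_x` represents evaluation at `x` for the form `Q_α = Q + α⟨·,·⟩`:
`Q(R_α δ_x, u) + α⟨R_α δ_x, u⟩ = u(x) m(x)`, and by its Laplace representation `R_α δ_x (y)`
is bounded by the Green function `G(x,y)` and recovers it as `α → 0` (Fatou).

If `Q` is transient with reference function `g`, test the transience inequality against
`v = R_α δ_x`, for which `Q(v) ≤ v(x) m(x)`: evaluating at `x` and then at `y` bounds
`R_α δ_x (y)` by `1 / (g(x) g(y) m(y))` uniformly in `α`, hence `G(x,y) < ∞`.

Conversely, Cauchy–Schwarz for `Q_α` gives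
`|u(y)| m(y) ≤ (G(y,y) m(y))^{1/2} (Q(u) + α‖u‖²)^{1/2}`; letting `α → 0` yields
`|u(y)| m(y) ≤ K(y) Q(u)^{1/2}`, and any strictly positive summable weight damped by
`(1 + K(y))(1 + m(y))` is a reference function.
-/

theorem abs_add_le_sqrt_add_mul_sqrt_add {x y p q r s : ℝ} (hp : 0 ≤ p) (hq : 0 ≤ q)
    (hr : 0 ≤ r) (hs : 0 ≤ s) (hx : |x| ≤ √p * √q) (hy : |y| ≤ √r * √s) :
    |x + y| ≤ √(p + r) * √(q + s) := by
  have hcs := Real.sum_sqrt_mul_sqrt_le Finset.univ (f := ![p, r]) (g := ![q, s])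
    (by simp [Fin.forall_fin_two, hp, hr]) (by simp [Fin.forall_fin_two, hq, hs])
  simp only [Fin.sum_univ_two, Matrix.cons_val_zero, Matrix.cons_val_one] at hcs
  linarith [abs_add_le x y]

theorem le_one_div_of_sq_mul_le {s a : ℝ} (hs : 0 ≤ s) (ha : 0 < a) (h : s ^ 2 * a ≤ s) :
    s ≤ 1 / a := by
  rw [le_div_iff₀ ha]
  rcases hs.eq_or_lt with rfl | hpos
  · simp
  · nlinarith

theorem summable_and_tsum_abs_mul_abs_mul_le {ι : Type*} {a b w : ι → ℝ} (hw : ∀ i, 0 ≤ w i)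
    (ha : Summable fun i => a i ^ 2 * w i) (hb : Summable fun i => b i ^ 2 * w i) :
    Summable (fun i => |a i| * |b i| * w i) ∧
      ∑' i, |a i| * |b i| * w i ≤ √(∑' i, a i ^ 2 * w i) * √(∑' i, b i ^ 2 * w i) := by
  have hnonneg : 0 ≤ fun i => |a i| * |b i| * w i := fun i => by have := hw i; positivity
  have hpartial : ∀ s : Finset ι, ∑ i ∈ s, |a i| * |b i| * w i ≤
      √(∑' i, a i ^ 2 * w i) * √(∑' i, b i ^ 2 * w i) := by
    intro s
    have hsq : ∀ c : ι → ℝ, ∀ i, (|c i| * √(w i)) ^ 2 = c i ^ 2 * w i := fun c i => by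
      rw [mul_pow, sq_abs, Real.sq_sqrt (hw i)]
    calc ∑ i ∈ s, |a i| * |b i| * w i
        = ∑ i ∈ s, (|a i| * √(w i)) * (|b i| * √(w i)) :=
          Finset.sum_congr rfl fun i _ => by rw [mul_mul_mul_comm, Real.mul_self_sqrt (hw i)]
      _ ≤ √(∑ i ∈ s, a i ^ 2 * w i) * √(∑ i ∈ s, b i ^ 2 * w i) := by
          simpa only [hsq] using Real.sum_mul_le_sqrt_mul_sqrt s (fun i => |a i| * √(w i))
            (fun i => |b i| * √(w i))
      _ ≤ √(∑' i, a i ^ 2 * w i) * √(∑' i, b i ^ 2 * w i) := by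
          gcongr
          · exact ha.sum_le_tsum s fun i _ => mul_nonneg (sq_nonneg _) (hw i)
          · exact hb.sum_le_tsum s fun i _ => mul_nonneg (sq_nonneg _) (hw i)
  exact ⟨summable_of_sum_le hnonneg hpartial, Real.tsum_le_of_sum_le hnonneg hpartial⟩

theorem abs_tsum_mul_mul_le {ι : Type*} {a b w : ι → ℝ} (hw : ∀ i, 0 ≤ w i)
    (ha : Summable fun i => a i ^ 2 * w i) (hb : Summable fun i => b i ^ 2 * w i) :
    |∑' i, a i * b i * w i| ≤ √(∑' i, a i ^ 2 * w i) * √(∑' i, b i ^ 2 * w i) := by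
  obtain ⟨hsum, hle⟩ := summable_and_tsum_abs_mul_abs_mul_le hw ha hb
  have habs : ∀ i, ‖a i * b i * w i‖ = |a i| * |b i| * w i := fun i => by
    rw [Real.norm_eq_abs, abs_mul, abs_mul, abs_of_nonneg (hw i)]
  calc |∑' i, a i * b i * w i| = ‖∑' i, a i * b i * w i‖ := (Real.norm_eq_abs _).symm
    _ ≤ ∑' i, |a i| * |b i| * w i := by
        simpa only [habs] using
          norm_tsum_le_tsum_norm (f := fun i => a i * b i * w i) (hsum.congr fun i => (habs i).symm)
    _ ≤ _ := hle

theorem MemL2.summable_abs_mul_mul {V : Type*} {m u g : V → ℝ} (hm : ∀ x, 0 ≤ m x)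
    (hu : MemL2 m u) (hg : ∀ x, 0 ≤ g x) {C : ℝ} (hgC : ∀ x, g x ≤ C)
    (hgm : Summable fun x => g x * m x) : Summable fun x => |u x| * g x * m x := by
  have hg2 : Summable fun x => g x ^ 2 * m x :=
    (hgm.mul_left C).of_nonneg_of_le (fun x => mul_nonneg (sq_nonneg _) (hm x)) fun x => by
      rw [sq, mul_assoc]
      exact mul_le_mul_of_nonneg_right (hgC x) (mul_nonneg (hg x) (hm x))
  exact (summable_and_tsum_abs_mul_abs_mul_le hm hu hg2).1.congr fun x => by
    rw [abs_of_nonneg (hg x)]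

namespace WeightedGraph

variable {V : Type*} (G : WeightedGraph V)

theorem energyBilin_eq (u v : V → ℝ) :
    G.energyBilin u v = ∑' p : V × V, (u p.1 - u p.2) * (v p.1 - v p.2) * (G.b p.1 p.2 / 2)
      + ∑' x, u x * v x * G.c x := by
  rw [energyBilin, ← tsum_mul_left]
  congr 1 <;> exact tsum_congr fun _ => by ring

theorem energyBilin_self_eq (u : V → ℝ) :
    G.energyBilin u u = ∑' p : V × V, (u p.1 - u p.2) ^ 2 * (G.b p.1 p.2 / 2)
      + ∑' x, u x ^ 2 * G.c x := by
  simp only [energyBilin_eq, sq]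

theorem energyBilin_self_nonneg (u : V → ℝ) : 0 ≤ G.energyBilin u u := by
  rw [energyBilin_self_eq]
  exact add_nonneg
    (tsum_nonneg fun _ => mul_nonneg (sq_nonneg _) (div_nonneg (G.b_nonneg _ _) zero_le_two))
    (tsum_nonneg fun x => mul_nonneg (sq_nonneg _) (G.c_nonneg x))

variable {G}

theorem FiniteEnergy.summable_edge {u : V → ℝ} (hu : G.FiniteEnergy u) :
    Summable fun p : V × V => (u p.1 - u p.2) ^ 2 * (G.b p.1 p.2 / 2) := by
  have h := (ENNReal.add_lt_top.1 hu).1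
  have hfin := ENNReal.lt_top_of_mul_ne_top_right h.ne (by norm_num)
  refine ((ENNReal.summable_toReal hfin.ne).div_const 2).congr fun p => ?_
  rw [ENNReal.toReal_ofReal (mul_nonneg (G.b_nonneg _ _) (sq_nonneg _))]
  ring

theorem FiniteEnergy.summable_killing {u : V → ℝ} (hu : G.FiniteEnergy u) :
    Summable fun x => u x ^ 2 * G.c x := by
  refine (ENNReal.summable_toReal (ENNReal.add_lt_top.1 hu).2.ne).congr fun x => ?_
  rw [ENNReal.toReal_ofReal (mul_nonneg (G.c_nonneg _) (sq_nonneg _)), mul_comm]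

theorem abs_energyBilin_le {u v : V → ℝ} (hu : G.FiniteEnergy u) (hv : G.FiniteEnergy v) :
    |G.energyBilin u v| ≤ √(G.energyBilin u u) * √(G.energyBilin v v) := by
  have hb : ∀ p : V × V, 0 ≤ G.b p.1 p.2 / 2 := fun _ => div_nonneg (G.b_nonneg _ _) zero_le_two
  rw [energyBilin_eq, energyBilin_self_eq, energyBilin_self_eq]
  exact abs_add_le_sqrt_add_mul_sqrt_add
    (tsum_nonneg fun p => mul_nonneg (sq_nonneg _) (hb p))
    (tsum_nonneg fun p => mul_nonneg (sq_nonneg _) (hb p))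
    (tsum_nonneg fun x => mul_nonneg (sq_nonneg _) (G.c_nonneg x))
    (tsum_nonneg fun x => mul_nonneg (sq_nonneg _) (G.c_nonneg x))
    (abs_tsum_mul_mul_le hb hu.summable_edge hv.summable_edge)
    (abs_tsum_mul_mul_le G.c_nonneg hu.summable_killing hv.summable_killing)

variable {m : V → ℝ}

theorem abs_energyBilin_add_mul_l2inner_le (hm : ∀ x, 0 ≤ m x) {α : ℝ} (hα : 0 ≤ α)
    {u v : V → ℝ} (hu : G.FiniteEnergy u) (hv : G.FiniteEnergy v) (hu2 : MemL2 m u)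
    (hv2 : MemL2 m v) :
    |G.energyBilin u v + α * l2inner m u v| ≤
      √(G.energyBilin u u + α * l2inner m u u) * √(G.energyBilin v v + α * l2inner m v v) := by
  have hαm : ∀ x, 0 ≤ α * m x := fun x => mul_nonneg hα (hm x)
  have hinner : ∀ f h : V → ℝ, α * l2inner m f h = ∑' x, f x * h x * (α * m x) := fun f h => by
    rw [l2inner, ← tsum_mul_left]
    exact tsum_congr fun _ => by ring
  have hnorm : ∀ f : V → ℝ, α * l2inner m f f = ∑' x, f x ^ 2 * (α * m x) := fun f => by
    simp only [hinner, sq]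
  have hsummable : ∀ f : V → ℝ, MemL2 m f → Summable fun x => f x ^ 2 * (α * m x) :=
    fun f hf => (hf.mul_left α).congr fun _ => by ring
  rw [hnorm u, hnorm v, hinner u v]
  exact abs_add_le_sqrt_add_mul_sqrt_add (G.energyBilin_self_nonneg u)
    (G.energyBilin_self_nonneg v) (tsum_nonneg fun x => mul_nonneg (sq_nonneg _) (hαm x))
    (tsum_nonneg fun x => mul_nonneg (sq_nonneg _) (hαm x)) (abs_energyBilin_le hu hv)
    (abs_tsum_mul_mul_le hαm (hsummable u hu2) (hsummable v hv2))

theorem formTransient_of_abs_mul_le [Countable V] (hm : ∀ x, 0 < m x) {dom : Set (V → ℝ)}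
    {K : V → ℝ} (hK : ∀ x, 0 ≤ K x)
    (h : ∀ u ∈ dom, ∀ x, |u x| * m x ≤ K x * √(G.energyBilin u u)) :
    G.FormTransient m dom := by
  cases nonempty_encodable V
  obtain ⟨ε, hε, c, hεc, hc⟩ := posSumOfEncodable one_pos V
  set g : V → ℝ := fun x => ε x / ((1 + K x) * (1 + m x))
  have hden : ∀ x, 1 ≤ (1 + K x) * (1 + m x) := fun x => by nlinarith [hK x, hm x]
  have hg : ∀ x, 0 < g x := fun x => div_pos (hε x) (by linarith [hden x])
  have hgm : ∀ x, g x * m x ≤ ε x := fun x => by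
    rw [div_mul_eq_mul_div, div_le_iff₀ (by linarith [hden x])]
    nlinarith [hε x, hK x, hm x, mul_nonneg (hε x).le (hK x)]
  have hKg : ∀ x, K x * g x ≤ ε x := fun x => by
    rw [mul_div_assoc', div_le_iff₀ (by linarith [hden x])]
    nlinarith [hε x, hK x, hm x, mul_nonneg (mul_nonneg (hε x).le (hK x)) (hm x).le]
  refine ⟨g, hg, hεc.summable.of_nonneg_of_le (fun x => (mul_pos (hg x) (hm x)).le) hgm,
    ⟨c, fun x => ?_⟩, fun u hu => ?_⟩
  · exact (div_le_self (hε x).le (hden x)).trans (le_hasSum hεc x fun j _ => (hε j).le)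
  · set q := √(G.energyBilin u u)
    have hpt : ∀ x, |u x| * g x * m x ≤ ε x * q := fun x =>
      calc |u x| * g x * m x = |u x| * m x * g x := by ring
        _ ≤ K x * q * g x := mul_le_mul_of_nonneg_right (h u hu x) (hg x).le
        _ = K x * g x * q := by ring
        _ ≤ ε x * q := mul_le_mul_of_nonneg_right (hKg x) (Real.sqrt_nonneg _)
    have hsum : Summable fun x => ε x * q := hεc.summable.mul_right q
    calc ∑' x, |u x| * g x * m x ≤ ∑' x, ε x * q :=
          Summable.tsum_le_tsum hpt (hsum.of_nonneg_of_le (fun x => by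
            have := hg x; have := hm x; positivity) hpt) hsum
      _ = c * q := by rw [tsum_mul_right, hεc.tsum_eq]
      _ ≤ q := mul_le_of_le_one_left (Real.sqrt_nonneg _) hc

end WeightedGraph

section Delta

variable {V : Type*}

open scoped Classical in
noncomputable def delta (x : V) : V → ℝ := fun z => if z = x then 1 else 0

theorem delta_nonneg (x z : V) : 0 ≤ delta x z := by
  unfold delta; split <;> norm_num

theorem memL2_delta {m : V → ℝ} (x : V) : MemL2 m (delta x) :=
  summable_of_ne_finset_zero (s := {x}) fun z hz => by
    simp [delta, Finset.mem_singleton.not.1 hz]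

theorem l2inner_delta (m : V → ℝ) (x : V) (u : V → ℝ) :
    l2inner m (delta x) u = u x * m x := by
  rw [l2inner, tsum_eq_single x fun z hz => by simp [delta, hz]]
  simp [delta]

end Delta

namespace FormSetup

variable {V : Type*} {G : WeightedGraph V} {m : V → ℝ} (S : FormSetup G m)

theorem green_eq_lintegral_delta (x y : V) :
    S.green x y = ∫⁻ t in Set.Ioi 0, ENNReal.ofReal (S.T t (delta x) y) := rfl

theorem energyBilin_resolvent_delta {α : ℝ} (hα : 0 < α) (x : V) {u : V → ℝ} (hu : u ∈ S.dom) :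
    G.energyBilin (S.R α (delta x)) u + α * l2inner m (S.R α (delta x)) u = u x * m x := by
  rw [S.R_char α hα _ (memL2_delta x) u hu, l2inner_delta]

theorem energyBilin_resolvent_delta_le (hm : ∀ x, 0 ≤ m x) {α : ℝ} (hα : 0 < α) (x : V) :
    G.energyBilin (S.R α (delta x)) (S.R α (delta x)) ≤ S.R α (delta x) x * m x := by
  have h := S.energyBilin_resolvent_delta hα x (S.R_mem α hα _ (memL2_delta x))
  have : 0 ≤ α * l2inner m (S.R α (delta x)) (S.R α (delta x)) :=
    mul_nonneg hα.le (tsum_nonneg fun z => mul_nonneg (mul_self_nonneg _) (hm z))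
  linarith

theorem ofReal_resolvent_delta_le_green {α : ℝ} (hα : 0 < α) (x y : V) :
    ENNReal.ofReal (S.R α (delta x) y) ≤ S.green x y := by
  rw [S.R_laplace α hα _ (memL2_delta x) (delta_nonneg x) y, green_eq_lintegral_delta]
  refine setLIntegral_mono' measurableSet_Ioi fun t ht => ENNReal.ofReal_le_ofReal ?_
  have ht : 0 < t := ht
  exact mul_le_of_le_one_left (S.T_pos t ht _ (delta_nonneg x) y)
    (Real.exp_le_one_iff.2 (by nlinarith))

theorem green_le_ofReal_of_resolvent_le {x y : V} {C : ℝ}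
    (h : ∀ α, 0 < α → S.R α (delta x) y ≤ C) : S.green x y ≤ ENNReal.ofReal C := by
  set F : ℝ → ℝ → ℝ≥0∞ := fun α t => ENNReal.ofReal (Real.exp (-α * t) * S.T t (delta x) y)
  have hF : ∀ t, Tendsto (fun α => F α t) (nhdsWithin 0 (Set.Ioi 0))
      (nhds (ENNReal.ofReal (S.T t (delta x) y))) := fun t => by
    have hc : Continuous fun α => F α t := ENNReal.continuous_ofReal.comp (by fun_prop)
    simpa [F] using (hc.tendsto 0).mono_left nhdsWithin_le_nhds
  have hmeas : ∀ α, AEMeasurable (F α) (volume.restrict (Set.Ioi 0)) := fun α =>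
    (((by fun_prop : Continuous fun t : ℝ => Real.exp (-α * t)).continuousOn.mul
      (S.T_cont _ (memL2_delta x) y)).aemeasurable measurableSet_Ioi).ennreal_ofReal
  calc S.green x y = ∫⁻ t in Set.Ioi 0, liminf (fun α => F α t) (nhdsWithin 0 (Set.Ioi 0)) := by
        rw [green_eq_lintegral_delta]
        exact lintegral_congr fun t => (hF t).liminf_eq.symm
    _ ≤ liminf (fun α => ∫⁻ t in Set.Ioi 0, F α t) (nhdsWithin 0 (Set.Ioi 0)) :=
        lintegral_liminf_le' hmeas
    _ ≤ ENNReal.ofReal C := liminf_le_of_frequently_le' <| Eventually.frequently <|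
        eventually_nhdsWithin_of_forall fun α hα => by
          rw [← S.R_laplace α hα _ (memL2_delta x) (delta_nonneg x) y]
          exact ENNReal.ofReal_le_ofReal (h α hα)

theorem resolvent_delta_le_of_reference (hm : ∀ x, 0 < m x) {g : V → ℝ} {C : ℝ}
    (hg : ∀ x, 0 < g x) (hgm : Summable fun x => g x * m x) (hgC : ∀ x, g x ≤ C)
    (hQ : ∀ u ∈ S.dom, ∑' x, |u x| * g x * m x ≤ √(G.energyBilin u u))
    {α : ℝ} (hα : 0 < α) (x y : V) : S.R α (delta x) y ≤ 1 / (g x * g y * m y) := by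
  set v := S.R α (delta x)
  have hv : v ∈ S.dom := S.R_mem α hα _ (memL2_delta x)
  have hv0 : ∀ z, 0 ≤ v z := S.R_pos α hα _ (delta_nonneg x)
  have hsum := (S.dom_l2 v hv).summable_abs_mul_mul (fun z => (hm z).le) (fun z => (hg z).le)
    hgC hgm
  have hpt : ∀ z, v z * g z * m z ≤ √(v x * m x) := fun z =>
    calc v z * g z * m z = |v z| * g z * m z := by rw [abs_of_nonneg (hv0 z)]
      _ ≤ ∑' z, |v z| * g z * m z := hsum.le_tsum z fun z _ => by
          have := hg z; have := hm z; positivity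
      _ ≤ √(G.energyBilin v v) := hQ v hv
      _ ≤ √(v x * m x) :=
          Real.sqrt_le_sqrt (S.energyBilin_resolvent_delta_le (fun z => (hm z).le) hα x)
  have hx : √(v x * m x) ≤ 1 / g x := le_one_div_of_sq_mul_le (Real.sqrt_nonneg _) (hg x) <| by
    rw [Real.sq_sqrt (mul_nonneg (hv0 x) (hm x).le)]
    linarith [hpt x]
  rw [le_div_iff₀ (by have := hg x; have := hg y; have := hm y; positivity)]
  calc v y * (g x * g y * m y) = g x * (v y * g y * m y) := by ring
    _ ≤ g x * (1 / g x) := mul_le_mul_of_nonneg_left ((hpt y).trans hx) (hg x).le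
    _ = 1 := mul_one_div_cancel (hg x).ne'

theorem abs_mul_le_sqrt_green_mul_sqrt_energyBilin (hm : ∀ x, 0 ≤ m x) {y : V}
    (hy : S.green y y < ⊤) {u : V → ℝ} (hu : u ∈ S.dom) :
    |u y| * m y ≤ √((S.green y y).toReal * m y) * √(G.energyBilin u u) := by
  have hα_bound : ∀ α > 0, |u y| * m y ≤
      √((S.green y y).toReal * m y) * √(G.energyBilin u u + α * l2inner m u u) := by
    intro α hα
    set v := S.R α (delta y)
    have hv := S.R_mem α hα _ (memL2_delta y)
    have hvy : v y * m y ≤ (S.green y y).toReal * m y := mul_le_mul_of_nonneg_right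
      ((ENNReal.ofReal_le_iff_le_toReal hy.ne).1 (S.ofReal_resolvent_delta_le_green hα y y)) (hm y)
    calc |u y| * m y = |G.energyBilin v u + α * l2inner m v u| := by
          rw [S.energyBilin_resolvent_delta hα y hu, abs_mul, abs_of_nonneg (hm y)]
      _ ≤ √(G.energyBilin v v + α * l2inner m v v) * √(G.energyBilin u u + α * l2inner m u u) :=
          WeightedGraph.abs_energyBilin_add_mul_l2inner_le hm hα.le (S.dom_fe v hv)
            (S.dom_fe u hu) (S.dom_l2 v hv) (S.dom_l2 u hu)
      _ ≤ _ := by rw [S.energyBilin_resolvent_delta hα y hv]; gcongr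
  have hlim : Tendsto (fun α => √((S.green y y).toReal * m y) *
      √(G.energyBilin u u + α * l2inner m u u)) (nhdsWithin 0 (Set.Ioi 0))
      (nhds (√((S.green y y).toReal * m y) * √(G.energyBilin u u))) := by
    have hc : Continuous fun α : ℝ => √((S.green y y).toReal * m y) *
        √(G.energyBilin u u + α * l2inner m u u) := by fun_prop
    simpa using (hc.tendsto 0).mono_left nhdsWithin_le_nhds
  exact ge_of_tendsto hlim (eventually_nhdsWithin_of_forall hα_bound)

end FormSetup

/-- the Dirichlet form `Q` is transient (existence of a strictly positive
reference function `g ∈ ℓ¹(V,m) ∩ ℓ^∞(V)` with `⟨|u|,g⟩ ≤ Q(u)^{1/2}` on `D(Q)`) if and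
only if its semigroup is transient (the Green function is finite everywhere). -/
theorem form_transient_iff_semigroup_transient {V : Type*} [Countable V]
    (G : WeightedGraph V) (m : V → ℝ) (hm : ∀ x, 0 < m x) (S : FormSetup G m) :
    G.FormTransient m S.dom ↔ ∀ x y, S.green x y < ⊤ := by
  constructor
  · rintro ⟨g, hg, hgm, ⟨C, hgC⟩, hQ⟩ x y
    exact (S.green_le_ofReal_of_resolvent_le fun α hα =>
      S.resolvent_delta_le_of_reference hm hg hgm hgC hQ hα x y).trans_lt ENNReal.ofReal_lt_top
  · intro hgreen
    exact G.formTransient_of_abs_mul_le hm (fun y => Real.sqrt_nonneg _) fun u hu y =>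
      S.abs_mul_le_sqrt_green_mul_sqrt_energyBilin (fun x => (hm x).le) (hgreen y y) hu
end

section
/- For (b,0) connected and m(V) < ∞, the following are equivalent: (i) Q^{(D)} is recurrent; (ii) Q^{(D)} is stochastically complete, i.e. (L^{(D)}+1)^{-1}1 = 1 (resolvent extended to ℓ^∞); (iii) Q^{(D)} = Q^{(N)}, i.e. the regular and Neumann Dirichlet forms coincide. -/
open scoped ENNReal NNReal BigOperators
open MeasureTheory Filter

/-! With `c = 0` and `m(V) < ∞`, all three properties are equivalent to `w := (L+1)⁻¹ 1 = 1`.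

* Stochastic completeness: by symmetry of the resolvent, `(L+1)⁻¹ f (x) m(x)` is the pairing of
  `f` with `(L+1)⁻¹ δ_x ∈ ℓ¹(V,m)`, so monotone limits can be taken by dominated convergence.
* Recurrence: if `w(y) < 1`, the form equations of `w` and of `(L+α)⁻¹ δ_y` give
  `(1 - w(y)) (L+α)⁻¹ δ_y(y) ≤ 1` for all `α > 0`, so the Green function is finite at `(y, y)`.
  Conversely `w = 1` makes the semigroup conservative; Cauchy–Schwarz against `1 ∈ ℓ²(V,m)`
  gives `e^{-2sL} δ_x(x) ≥ m(x) / m(V)`, and positivity improvement spreads this to a positive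
  lower bound for `e^{-tL} δ_x(y)`, `t > 1`, whose time integral diverges.
* `Q^(D) = Q^(N)`: then `v := 1 - w` lies in the domain and `‖v‖² = Q(w, v) = -Q(w) ≤ 0`.
  Conversely `1 = w ∈ D(Q^(D))`; its finitely supported approximants, clipped to `[0, 1]`, are
  cut-offs `e_n` with `u e_n → u` for bounded `u` of finite energy, and every `u` is the limit
  of its truncations at levels `±k`. -/

section

open Set Real Topology

theorem ENNReal.tendsto_tsum_of_dominated {ι : Type*} {F : ℕ → ι → ℝ≥0∞} {f B : ι → ℝ≥0∞}
    (hB : ∑' i, B i ≠ ⊤) (hle : ∀ n i, F n i ≤ B i)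
    (hF : ∀ i, Tendsto (F · i) atTop (𝓝 (f i))) :
    Tendsto (fun n => ∑' i, F n i) atTop (𝓝 (∑' i, f i)) := by
  let _ : MeasurableSpace ι := ⊤
  simp_rw [← lintegral_count]
  exact tendsto_lintegral_of_dominated_convergence B (fun _ => measurable_from_top)
    (fun n => .of_forall (hle n)) (by rwa [lintegral_count]) (.of_forall hF)

theorem lintegral_exp_neg_mul_Ioi {α : ℝ} (hα : 0 < α) :
    ∫⁻ t in Ioi 0, ENNReal.ofReal (exp (-α * t)) = ENNReal.ofReal α⁻¹ := by
  rw [← ofReal_integral_eq_lintegral_ofReal (exp_neg_integrableOn_Ioi 0 hα)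
    (.of_forall fun t => (exp_pos _).le), integral_exp_mul_Ioi (neg_lt_zero.2 hα)]
  simp

theorem eqOn_one_of_lintegral_exp_neg_mul_eq {f : ℝ → ℝ} {α : ℝ} (hα : 0 < α)
    (hf : ContinuousOn f (Ioi 0)) (hf0 : ∀ t > 0, 0 ≤ f t) (hf1 : ∀ t > 0, f t ≤ 1)
    (h : ∫⁻ t in Ioi 0, ENNReal.ofReal (exp (-α * t) * f t) = ENNReal.ofReal α⁻¹) :
    EqOn f 1 (Ioi 0) := by
  have hle : (fun t => ENNReal.ofReal (exp (-α * t) * f t))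
      ≤ᵐ[volume.restrict (Ioi 0)] fun t => ENNReal.ofReal (exp (-α * t)) :=
    (ae_restrict_iff' measurableSet_Ioi).2 <| .of_forall fun t ht =>
      ENNReal.ofReal_le_ofReal (mul_le_of_le_one_right (exp_pos _).le (hf1 t ht))
  have hae := ae_eq_of_ae_le_of_lintegral_le hle (by rw [h]; exact ENNReal.ofReal_ne_top)
    (by fun_prop) (by rw [h, lintegral_exp_neg_mul_Ioi hα])
  refine (volume : Measure ℝ).eqOn_open_of_ae_eq ?_ isOpen_Ioi hf continuousOn_const
  filter_upwards [hae, ae_restrict_mem measurableSet_Ioi] with t ht htpos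
  have hpos := exp_pos (-α * t)
  rw [ENNReal.ofReal_eq_ofReal_iff (mul_nonneg hpos.le (hf0 t htpos)) hpos.le] at ht
  simpa using (mul_eq_left₀ hpos.ne').1 ht

theorem lintegral_le_of_lintegral_exp_neg_mul_le {F : ℝ → ℝ} (hF : ContinuousOn F (Ioi 0))
    {C : ℝ≥0∞} (h : ∀ α > 0, ∫⁻ t in Ioi 0, ENNReal.ofReal (exp (-α * t) * F t) ≤ C) :
    ∫⁻ t in Ioi 0, ENNReal.ofReal (F t) ≤ C := by
  have hlim : ∀ t, Tendsto (fun n : ℕ => ENNReal.ofReal (exp (-(1 / ((n : ℝ) + 1)) * t) * F t))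
      atTop (𝓝 (ENNReal.ofReal (F t))) := by
    intro t
    refine ENNReal.tendsto_ofReal ?_
    have h0 : Tendsto (fun n : ℕ => -(1 / ((n : ℝ) + 1)) * t) atTop (𝓝 0) := by
      simpa using tendsto_one_div_add_atTop_nhds_zero_nat.neg.mul_const t
    simpa using ((continuous_exp.tendsto 0).comp h0).mul_const (F t)
  calc ∫⁻ t in Ioi 0, ENNReal.ofReal (F t)
      = ∫⁻ t in Ioi 0, liminf (fun n : ℕ =>
          ENNReal.ofReal (exp (-(1 / ((n : ℝ) + 1)) * t) * F t)) atTop := by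
        simp_rw [(hlim _).liminf_eq]
    _ ≤ liminf (fun n : ℕ => ∫⁻ t in Ioi 0,
          ENNReal.ofReal (exp (-(1 / ((n : ℝ) + 1)) * t) * F t)) atTop :=
        lintegral_liminf_le' fun n =>
          ((by fun_prop : Continuous fun t => exp (-(1 / ((n : ℝ) + 1)) * t)).continuousOn.mul
            hF).aemeasurable measurableSet_Ioi |>.ennreal_ofReal
    _ ≤ C := liminf_le_of_le (by isBoundedDefault) fun b hb => hb.exists.elim
        fun n hn => hn.trans (h _ (by positivity))

theorem ENNReal.ofReal_mul_add_sq_le {w : ℝ} (hw : 0 ≤ w) (a b : ℝ) :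
    ENNReal.ofReal (w * (a + b) ^ 2)
      ≤ 2 * ENNReal.ofReal (w * a ^ 2) + 2 * ENNReal.ofReal (w * b ^ 2) := by
  rw [← ENNReal.ofReal_ofNat 2, ← ENNReal.ofReal_mul zero_le_two, ← ENNReal.ofReal_mul zero_le_two,
    ← ENNReal.ofReal_add (by positivity) (by positivity)]
  exact ENNReal.ofReal_le_ofReal (by nlinarith [sq_nonneg (a - b)])

theorem abs_sub_sub_sub_le_of_monotone {φ : ℝ → ℝ} (hφ : Monotone φ)
    (hlip : ∀ a b, |φ a - φ b| ≤ |a - b|) (a b : ℝ) : |(a - φ a) - (b - φ b)| ≤ |a - b| := by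
  wlog hba : b ≤ a generalizing a b
  · rw [abs_sub_comm, abs_sub_comm a]
    exact this b a (le_of_not_ge hba)
  have h := hlip a b
  rw [abs_of_nonneg (sub_nonneg.2 (hφ hba)), abs_of_nonneg (sub_nonneg.2 hba)] at h
  rw [abs_of_nonneg (sub_nonneg.2 hba), abs_le]
  constructor <;> linarith [hφ hba]

theorem abs_projIcc_le {a b : ℝ} (h : a ≤ b) (ha : a ≤ 0) (hb : 0 ≤ b) (c : ℝ) :
    |(projIcc a b h c : ℝ)| ≤ |c| := by
  simpa [projIcc_of_mem h ⟨ha, hb⟩] using abs_projIcc_sub_projIcc h (c := c) (d := 0)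

section MemL2

variable {V : Type*} {m : V → ℝ}

theorem memL2_of_abs_le (hm : ∀ x, 0 ≤ m x) {u v : V → ℝ} (hv : MemL2 m v)
    (h : ∀ x, |u x| ≤ |v x|) : MemL2 m u :=
  hv.of_nonneg_of_le (fun x => mul_nonneg (sq_nonneg _) (hm x)) fun x =>
    mul_le_mul_of_nonneg_right (sq_le_sq.2 (h x)) (hm x)

theorem add_sq_mul_le {w : ℝ} (hw : 0 ≤ w) (a b : ℝ) :
    (a + b) ^ 2 * w ≤ 2 * (a ^ 2 * w) + 2 * (b ^ 2 * w) := by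
  nlinarith [mul_nonneg (sq_nonneg (a - b)) hw]

theorem MemL2.add (hm : ∀ x, 0 ≤ m x) {u v : V → ℝ} (hu : MemL2 m u) (hv : MemL2 m v) :
    MemL2 m (u + v) :=
  ((hu.mul_left 2).add (hv.mul_left 2)).of_nonneg_of_le
    (fun x => mul_nonneg (sq_nonneg _) (hm x)) fun x => add_sq_mul_le (hm x) (u x) (v x)

theorem MemL2.neg {u : V → ℝ} (hu : MemL2 m u) : MemL2 m (-u) := by
  simpa [MemL2] using hu

theorem MemL2.sub (hm : ∀ x, 0 ≤ m x) {u v : V → ℝ} (hu : MemL2 m u) (hv : MemL2 m v) :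
    MemL2 m (u - v) := by
  simpa [sub_eq_add_neg] using hu.add hm hv.neg

theorem memL2_one (hfin : Summable m) : MemL2 m 1 := by
  simpa [MemL2] using hfin

theorem memL2_of_finite_support {u : V → ℝ} (hu : u.support.Finite) : MemL2 m u :=
  summable_of_hasFiniteSupport <| hu.subset fun x hx => by
    simp only [Function.mem_support] at hx ⊢
    exact fun h => hx (by simp [h])

theorem memL2_single [DecidableEq V] (x : V) : MemL2 m (Pi.single x 1) :=
  memL2_of_finite_support <| (finite_singleton x).subset Pi.support_single_subset

theorem MemL2.summable_mul (hm : ∀ x, 0 ≤ m x) {u v : V → ℝ} (hu : MemL2 m u)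
    (hv : MemL2 m v) : Summable fun x => u x * v x * m x := by
  refine Summable.of_norm_bounded ((Summable.add hu hv).mul_left (1 / 2)) fun x => ?_
  rw [Real.norm_eq_abs, abs_mul, abs_mul, abs_of_nonneg (hm x)]
  have : |u x| * |v x| ≤ 1 / 2 * (u x ^ 2 + v x ^ 2) := by
    nlinarith [sq_nonneg (|u x| - |v x|), sq_abs (u x), sq_abs (v x)]
  nlinarith [hm x]

theorem MemL2.summable_abs_mul (hm : ∀ x, 0 ≤ m x) (hfin : Summable m) {u : V → ℝ}
    (hu : MemL2 m u) : Summable fun x => |u x| * m x := by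
  simpa [abs_mul, abs_of_nonneg (hm _)] using (hu.summable_mul hm (memL2_one hfin)).abs

theorem tsum_mul_sq_le (hm : ∀ x, 0 ≤ m x) (hfin : Summable m) {u : V → ℝ} (hu : MemL2 m u) :
    (∑' x, u x * m x) ^ 2 ≤ (∑' x, u x ^ 2 * m x) * ∑' x, m x := by
  have hum : Summable fun x => u x * m x := by
    simpa using hu.summable_mul hm (memL2_one hfin)
  refine le_of_tendsto_of_tendsto' (hum.hasSum.pow 2) (Tendsto.mul hu.hasSum hfin.hasSum) fun s =>
    Finset.sum_sq_le_sum_mul_sum_of_sq_le_mul s (fun x _ => mul_nonneg (sq_nonneg _) (hm x))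
      (fun x _ => hm x) fun x _ => le_of_eq (by ring)

theorem l2inner_comm (u v : V → ℝ) : l2inner m u v = l2inner m v u := by
  simp only [l2inner, mul_comm (u _)]

theorem l2inner_single_right [DecidableEq V] (u : V → ℝ) (x : V) :
    l2inner m u (Pi.single x 1) = u x * m x := by
  rw [l2inner, tsum_eq_single x fun z hz => by simp [hz]]
  simp

theorem tendsto_tsum_sq_mul_of_dominated (hm : ∀ x, 0 ≤ m x) {u : V → ℝ} (hu : MemL2 m u)
    {v : ℕ → V → ℝ} (hle : ∀ n x, |v n x| ≤ |u x|) (hv : ∀ x, Tendsto (v · x) atTop (𝓝 0)) :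
    Tendsto (fun n => ∑' x, v n x ^ 2 * m x) atTop (𝓝 0) := by
  simpa using tendsto_tsum_of_dominated_convergence (𝓕 := atTop)
    (f := fun n x => v n x ^ 2 * m x) (g := fun _ => 0) hu
    (fun x => by simpa using ((hv x).pow 2).mul_const (m x)) <| .of_forall fun n x => by
      rw [Real.norm_of_nonneg (mul_nonneg (sq_nonneg _) (hm x))]
      exact mul_le_mul_of_nonneg_right (sq_le_sq.2 (hle n x)) (hm x)

theorem tendsto_apply_of_tendsto_tsum_sq_mul (hm : ∀ x, 0 < m x) {v : ℕ → V → ℝ}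
    (hv : ∀ n, MemL2 m (v n)) (h : Tendsto (fun n => ∑' x, v n x ^ 2 * m x) atTop (𝓝 0))
    (x : V) : Tendsto (v · x) atTop (𝓝 0) := by
  have hsq : Tendsto (fun n => v n x ^ 2) atTop (𝓝 0) := by
    refine squeeze_zero (fun n => sq_nonneg _) (fun n => ?_) (by simpa using h.div_const (m x))
    rw [le_div_iff₀ (hm x)]
    exact (hv n).le_tsum x fun z _ => mul_nonneg (sq_nonneg _) (hm z).le
  refine (tendsto_zero_iff_abs_tendsto_zero _).2 ?_
  simpa [Function.comp_def, sqrt_sq_eq_abs] using (continuous_sqrt.tendsto 0).comp hsq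

end MemL2

namespace WeightedGraph

variable {V : Type*}

/-- The `b`-part of `energy`, without its factor `1 / 2`. -/
noncomputable def edgeEnergy (G : WeightedGraph V) (u : V → ℝ) : ℝ≥0∞ :=
  ∑' p : V × V, ENNReal.ofReal (G.b p.1 p.2 * (u p.1 - u p.2) ^ 2)

variable {G : WeightedGraph V}

theorem energy_eq_of_c_eq_zero (hc : ∀ x, G.c x = 0) (u : V → ℝ) :
    G.energy u = 2⁻¹ * G.edgeEnergy u := by
  simp [energy, edgeEnergy, hc]

theorem finiteEnergy_iff_of_c_eq_zero (hc : ∀ x, G.c x = 0) {u : V → ℝ} :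
    G.FiniteEnergy u ↔ G.edgeEnergy u ≠ ⊤ := by
  simp [FiniteEnergy, energy_eq_of_c_eq_zero hc, lt_top_iff_ne_top, ENNReal.mul_eq_top]

theorem edgeEnergy_mono {u v : V → ℝ} (h : ∀ x y, |v x - v y| ≤ |u x - u y|) :
    G.edgeEnergy v ≤ G.edgeEnergy u :=
  ENNReal.tsum_le_tsum fun p => ENNReal.ofReal_le_ofReal <|
    mul_le_mul_of_nonneg_left (sq_le_sq.2 (h p.1 p.2)) (G.b_nonneg _ _)

theorem edgeEnergy_add_le (u v : V → ℝ) :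
    G.edgeEnergy (u + v) ≤ 2 * G.edgeEnergy u + 2 * G.edgeEnergy v := by
  rw [edgeEnergy, edgeEnergy, edgeEnergy, ← ENNReal.tsum_mul_left, ← ENNReal.tsum_mul_left,
    ← ENNReal.tsum_add]
  refine ENNReal.tsum_le_tsum fun p => ?_
  convert ENNReal.ofReal_mul_add_sq_le (G.b_nonneg p.1 p.2) (u p.1 - u p.2) (v p.1 - v p.2)
    using 3
  simp only [Pi.add_apply]
  ring

theorem edgeEnergy_neg (u : V → ℝ) : G.edgeEnergy (-u) = G.edgeEnergy u := by
  simp only [edgeEnergy, Pi.neg_apply, neg_sub_neg]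
  congr! 4 with p
  ring

theorem edgeEnergy_sub_ne_top {u v : V → ℝ} (hu : G.edgeEnergy u ≠ ⊤)
    (hv : G.edgeEnergy v ≠ ⊤) : G.edgeEnergy (u - v) ≠ ⊤ := by
  rw [sub_eq_add_neg]
  refine ne_top_of_le_ne_top ?_ (edgeEnergy_add_le u (-v))
  rw [edgeEnergy_neg]
  finiteness

theorem edgeEnergy_const_sub (a : ℝ) (u : V → ℝ) :
    G.edgeEnergy (fun x => a - u x) = G.edgeEnergy u := by
  simp only [edgeEnergy]
  congr! 4 with p
  ring

theorem tsum_ofReal_b_mul_sq_ne_top {w : V → ℝ} (hw : w.support.Finite) :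
    ∑' p : V × V, ENNReal.ofReal (G.b p.1 p.2 * w p.1 ^ 2) ≠ ⊤ := by
  have hrow : ∀ x, ∑' y, ENNReal.ofReal (G.b x y * w x ^ 2)
      = ENNReal.ofReal (w x ^ 2) * ENNReal.ofReal (∑' y, G.b x y) := by
    intro x
    simp_rw [mul_comm (G.b x _), ENNReal.ofReal_mul (sq_nonneg _)]
    rw [ENNReal.tsum_mul_left, ENNReal.ofReal_tsum_of_nonneg (G.b_nonneg x) (G.b_summable x)]
  rw [ENNReal.tsum_prod']
  simp_rw [hrow]
  rw [tsum_eq_sum (s := hw.toFinset) fun x hx => by simp_all]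
  exact ENNReal.sum_ne_top.2 fun x _ =>
    ENNReal.mul_ne_top ENNReal.ofReal_ne_top ENNReal.ofReal_ne_top

theorem edgeEnergy_ne_top_of_finite_support {u : V → ℝ} (hu : u.support.Finite) :
    G.edgeEnergy u ≠ ⊤ := by
  have hswap : ∑' p : V × V, ENNReal.ofReal (G.b p.1 p.2 * u p.2 ^ 2)
      = ∑' p : V × V, ENNReal.ofReal (G.b p.1 p.2 * u p.1 ^ 2) := by
    rw [← (Equiv.prodComm V V).tsum_eq]
    simp [G.b_symm]
  have hle : G.edgeEnergy u ≤ ∑' p : V × V, (2 * ENNReal.ofReal (G.b p.1 p.2 * u p.1 ^ 2)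
      + 2 * ENNReal.ofReal (G.b p.1 p.2 * u p.2 ^ 2)) :=
    ENNReal.tsum_le_tsum fun p => by
      simpa [sub_eq_add_neg] using
        ENNReal.ofReal_mul_add_sq_le (G.b_nonneg p.1 p.2) (u p.1) (-u p.2)
  rw [ENNReal.tsum_add, ENNReal.tsum_mul_left, ENNReal.tsum_mul_left, hswap] at hle
  have := tsum_ofReal_b_mul_sq_ne_top (G := G) hu
  exact ne_top_of_le_ne_top (by finiteness) hle

theorem tendsto_edgeEnergy_zero_of_dominated {u : V → ℝ} (hu : G.edgeEnergy u ≠ ⊤)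
    {v : ℕ → V → ℝ} (hle : ∀ n x y, |v n x - v n y| ≤ |u x - u y|)
    (hv : ∀ x, Tendsto (v · x) atTop (𝓝 0)) :
    Tendsto (fun n => G.edgeEnergy (v n)) atTop (𝓝 0) := by
  have h := ENNReal.tendsto_tsum_of_dominated (f := fun _ => 0) hu
    (F := fun n p => ENNReal.ofReal (G.b p.1 p.2 * (v n p.1 - v n p.2) ^ 2))
    (fun n p => ENNReal.ofReal_le_ofReal <|
      mul_le_mul_of_nonneg_left (sq_le_sq.2 (hle n p.1 p.2)) (G.b_nonneg _ _))
    fun p => by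
      simpa using
        ENNReal.tendsto_ofReal ((((hv p.1).sub (hv p.2)).pow 2).const_mul (G.b p.1 p.2))
  rwa [tsum_zero] at h

theorem tendsto_edgeEnergy_mul_zero {u : V → ℝ} {M : ℝ} (hu : G.edgeEnergy u ≠ ⊤)
    (hM : ∀ x, |u x| ≤ M) {g : ℕ → V → ℝ} (hg1 : ∀ n x, |g n x| ≤ 1)
    (hg : ∀ x, Tendsto (g · x) atTop (𝓝 0))
    (hgE : Tendsto (fun n => G.edgeEnergy (g n)) atTop (𝓝 0)) :
    Tendsto (fun n => G.edgeEnergy (u * g n)) atTop (𝓝 0) := by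
  set A : ℕ → ℝ≥0∞ := fun n =>
    ∑' p : V × V, ENNReal.ofReal (G.b p.1 p.2 * (g n p.1 * (u p.1 - u p.2)) ^ 2)
  have hA : Tendsto A atTop (𝓝 0) := by
    have h := ENNReal.tendsto_tsum_of_dominated (f := fun _ => 0) hu
      (F := fun n p => ENNReal.ofReal (G.b p.1 p.2 * (g n p.1 * (u p.1 - u p.2)) ^ 2))
      (fun n p => ENNReal.ofReal_le_ofReal ?_) fun p => ?_
    · rwa [tsum_zero] at h
    · rw [mul_pow]
      exact mul_le_mul_of_nonneg_left (mul_le_of_le_one_left (sq_nonneg _)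
        (sq_le_one_iff_abs_le_one _ |>.2 (hg1 n p.1))) (G.b_nonneg _ _)
    · simpa using ENNReal.tendsto_ofReal
        ((((hg p.1).mul_const (u p.1 - u p.2)).pow 2).const_mul (G.b p.1 p.2))
  have hle : ∀ n, G.edgeEnergy (u * g n)
      ≤ 2 * A n + 2 * (ENNReal.ofReal (M ^ 2) * G.edgeEnergy (g n)) := by
    intro n
    rw [edgeEnergy, edgeEnergy, ← ENNReal.tsum_mul_left, ← ENNReal.tsum_mul_left,
      ← ENNReal.tsum_mul_left, ← ENNReal.tsum_add]
    refine ENNReal.tsum_le_tsum fun p => ?_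
    have hsplit : (u * g n) p.1 - (u * g n) p.2
        = g n p.1 * (u p.1 - u p.2) + u p.2 * (g n p.1 - g n p.2) := by
      simp only [Pi.mul_apply]
      ring
    rw [hsplit]
    refine (ENNReal.ofReal_mul_add_sq_le (G.b_nonneg _ _) _ _).trans (add_le_add_right ?_ _)
    rw [← ENNReal.ofReal_mul (sq_nonneg M)]
    refine mul_le_mul_right (ENNReal.ofReal_le_ofReal ?_) 2
    rw [mul_pow, mul_left_comm]
    exact mul_le_mul_of_nonneg_right (sq_le_sq.2 ((hM p.2).trans (le_abs_self M)))
      (mul_nonneg (G.b_nonneg _ _) (sq_nonneg _))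
  have hlim : Tendsto (fun n => 2 * A n + 2 * (ENNReal.ofReal (M ^ 2) * G.edgeEnergy (g n)))
      atTop (𝓝 0) := by
    simpa using (ENNReal.Tendsto.const_mul hA (by simp)).add
      (ENNReal.Tendsto.const_mul (ENNReal.Tendsto.const_mul hgE (by simp)) (by simp))
  exact tendsto_of_tendsto_of_tendsto_of_le_of_le tendsto_const_nhds hlim (fun _ => zero_le) hle

variable {m : V → ℝ}

variable (G m) in
noncomputable def formNormSq (u : V → ℝ) : ℝ :=
  (G.energy u).toReal + ∑' x, u x ^ 2 * m x

theorem mem_regDom_iff {u : V → ℝ} :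
    u ∈ G.regDom m ↔ G.FiniteEnergy u ∧ MemL2 m u ∧ ∃ f : ℕ → V → ℝ,
      (∀ n, (f n).support.Finite) ∧ Tendsto (fun n => G.formNormSq m (u - f n)) atTop (𝓝 0) :=
  Iff.rfl

theorem formNormSq_eq_of_c_eq_zero (hc : ∀ x, G.c x = 0) (u : V → ℝ) :
    G.formNormSq m u = 2⁻¹ * (G.edgeEnergy u).toReal + ∑' x, u x ^ 2 * m x := by
  simp [formNormSq, energy_eq_of_c_eq_zero hc]

theorem formNormSq_nonneg (hm : ∀ x, 0 ≤ m x) (u : V → ℝ) : 0 ≤ G.formNormSq m u :=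
  add_nonneg ENNReal.toReal_nonneg (tsum_nonneg fun x => mul_nonneg (sq_nonneg _) (hm x))

theorem formNormSq_add_le (hc : ∀ x, G.c x = 0) (hm : ∀ x, 0 ≤ m x) {u v : V → ℝ}
    (hu : G.edgeEnergy u ≠ ⊤) (hv : G.edgeEnergy v ≠ ⊤) (huL2 : MemL2 m u) (hvL2 : MemL2 m v) :
    G.formNormSq m (u + v) ≤ 2 * (G.formNormSq m u + G.formNormSq m v) := by
  have hE : (G.edgeEnergy (u + v)).toReal
      ≤ 2 * (G.edgeEnergy u).toReal + 2 * (G.edgeEnergy v).toReal := by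
    have h := ENNReal.toReal_mono (by finiteness) (edgeEnergy_add_le (G := G) u v)
    rwa [ENNReal.toReal_add (by finiteness) (by finiteness), ENNReal.toReal_mul,
      ENNReal.toReal_mul, ENNReal.toReal_ofNat] at h
  have hL2 : ∑' x, (u + v) x ^ 2 * m x
      ≤ 2 * ∑' x, u x ^ 2 * m x + 2 * ∑' x, v x ^ 2 * m x := by
    rw [← tsum_mul_left, ← tsum_mul_left, ← (huL2.mul_left 2).tsum_add (hvL2.mul_left 2)]
    exact (huL2.add hm hvL2).tsum_le_tsum (fun x => add_sq_mul_le (hm x) (u x) (v x))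
      ((huL2.mul_left 2).add (hvL2.mul_left 2))
  simp only [formNormSq_eq_of_c_eq_zero hc]
  linarith

theorem tendsto_formNormSq_zero (hc : ∀ x, G.c x = 0) {v : ℕ → V → ℝ}
    (hE : Tendsto (fun n => G.edgeEnergy (v n)) atTop (𝓝 0))
    (hL2 : Tendsto (fun n => ∑' x, v n x ^ 2 * m x) atTop (𝓝 0)) :
    Tendsto (fun n => G.formNormSq m (v n)) atTop (𝓝 0) := by
  simp only [formNormSq_eq_of_c_eq_zero hc]
  simpa using (((ENNReal.tendsto_toReal ENNReal.zero_ne_top).comp hE).const_mul 2⁻¹).add hL2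

theorem mem_regDom_of_tendsto (hc : ∀ x, G.c x = 0) (hm : ∀ x, 0 ≤ m x) {u : V → ℝ}
    (hu : G.FiniteEnergy u) (huL2 : MemL2 m u) {v : ℕ → V → ℝ} (hv : ∀ k, v k ∈ G.regDom m)
    (hlim : Tendsto (fun k => G.formNormSq m (u - v k)) atTop (𝓝 0)) : u ∈ G.regDom m := by
  have happrox : ∀ ε > 0, ∃ f : V → ℝ, f.support.Finite ∧ G.formNormSq m (u - f) < ε := by
    intro ε hε
    obtain ⟨k, hk⟩ := (hlim.eventually (gt_mem_nhds (by positivity : 0 < ε / 4))).exists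
    obtain ⟨hvE, hvL2, f, hf, hflim⟩ := mem_regDom_iff.1 (hv k)
    obtain ⟨n, hn⟩ := (hflim.eventually (gt_mem_nhds (by positivity : 0 < ε / 4))).exists
    rw [finiteEnergy_iff_of_c_eq_zero hc] at hu hvE
    have h := formNormSq_add_le hc hm (edgeEnergy_sub_ne_top hu hvE)
      (edgeEnergy_sub_ne_top hvE (edgeEnergy_ne_top_of_finite_support (hf n)))
      (huL2.sub hm hvL2) (hvL2.sub hm (memL2_of_finite_support (hf n)))
    rw [sub_add_sub_cancel] at h
    exact ⟨f n, hf n, by linarith⟩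
  choose f hf hfε using fun n : ℕ => happrox (1 / ((n : ℝ) + 1)) (by positivity)
  exact ⟨hu, huL2, f, hf, squeeze_zero (fun n => formNormSq_nonneg hm _) (fun n => (hfε n).le)
    tendsto_one_div_add_atTop_nhds_zero_nat⟩

/-- Finitely supported approximations of `1`, clipped to `[0, 1]`, are cut-off functions;
`g n` is `1 - cutoff`. -/
theorem exists_cutoff_of_one_mem_regDom (hc : ∀ x, G.c x = 0) (hm : ∀ x, 0 < m x)
    (h1 : 1 ∈ G.regDom m) :
    ∃ g : ℕ → V → ℝ, (∀ n, (1 - g n).support.Finite) ∧ (∀ n x, |g n x| ≤ 1) ∧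
      (∀ x, Tendsto (g · x) atTop (𝓝 0)) ∧ Tendsto (fun n => G.edgeEnergy (g n)) atTop (𝓝 0) := by
  obtain ⟨-, h1L2, f, hf, hlim⟩ := mem_regDom_iff.1 h1
  have hfE : ∀ n, G.edgeEnergy (1 - f n) ≠ ⊤ := fun n => by
    rw [show (1 : V → ℝ) - f n = fun x => 1 - f n x from rfl, edgeEnergy_const_sub]
    exact edgeEnergy_ne_top_of_finite_support (hf n)
  simp only [formNormSq_eq_of_c_eq_zero hc] at hlim
  have hL2 : Tendsto (fun n => ∑' x, (1 - f n) x ^ 2 * m x) atTop (𝓝 0) :=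
    squeeze_zero (fun n => tsum_nonneg fun x => mul_nonneg (sq_nonneg _) (hm x).le)
      (fun n => le_add_of_nonneg_left (by positivity)) hlim
  have hE : Tendsto (fun n => G.edgeEnergy (1 - f n)) atTop (𝓝 0) := by
    refine (ENNReal.tendsto_toReal_iff hfE ENNReal.zero_ne_top).1 ?_
    have h2 := hlim.const_mul 2
    rw [mul_zero] at h2
    refine squeeze_zero (fun n => ENNReal.toReal_nonneg) (fun n => ?_) h2
    have : 0 ≤ ∑' x, (1 - f n) x ^ 2 * m x :=
      tsum_nonneg fun x => mul_nonneg (sq_nonneg _) (hm x).le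
    linarith
  have hpt := tendsto_apply_of_tendsto_tsum_sq_mul hm
    (fun n => h1L2.sub (fun x => (hm x).le) (memL2_of_finite_support (hf n))) hL2
  refine ⟨fun n x => projIcc 0 1 zero_le_one (1 - f n x), fun n => (hf n).subset fun x hx => ?_,
    fun n x => ?_, fun x => ?_, ?_⟩
  · simp only [Function.mem_support] at hx ⊢
    intro h0
    simp [h0] at hx
  · have h01 := (projIcc (0 : ℝ) 1 zero_le_one (1 - f n x)).2
    exact abs_le.2 ⟨by linarith [h01.1], h01.2⟩
  · exact squeeze_zero_norm (fun n => abs_projIcc_le zero_le_one le_rfl zero_le_one _)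
      (by simpa using (hpt x).abs)
  · refine tendsto_of_tendsto_of_tendsto_of_le_of_le tendsto_const_nhds hE (fun _ => zero_le)
      fun n => edgeEnergy_mono fun x y => abs_projIcc_sub_projIcc _

theorem mem_regDom_of_abs_le (hc : ∀ x, G.c x = 0) (hm : ∀ x, 0 < m x)
    (h1 : 1 ∈ G.regDom m) {u : V → ℝ} {M : ℝ} (hM : ∀ x, |u x| ≤ M) (hu : G.FiniteEnergy u)
    (huL2 : MemL2 m u) : u ∈ G.regDom m := by
  obtain ⟨g, hg_supp, hg1, hg, hgE⟩ := exists_cutoff_of_one_mem_regDom hc hm h1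
  refine mem_regDom_iff.2 ⟨hu, huL2, fun n => u * (1 - g n),
    fun n => (hg_supp n).subset (Function.support_mul_subset_right _ _), ?_⟩
  simp only [show ∀ n, u - u * (1 - g n) = u * g n from fun n => by ring]
  refine tendsto_formNormSq_zero hc
    (tendsto_edgeEnergy_mul_zero ((finiteEnergy_iff_of_c_eq_zero hc).1 hu) hM hg1 hg hgE)
    (tendsto_tsum_sq_mul_of_dominated (fun x => (hm x).le) huL2 (fun n x => ?_) fun x => ?_)
  · rw [Pi.mul_apply, abs_mul]
    exact mul_le_of_le_one_right (abs_nonneg _) (hg1 n x)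
  · simpa using (hg x).const_mul (u x)

theorem regDom_eq_of_one_mem (hc : ∀ x, G.c x = 0) (hm : ∀ x, 0 < m x)
    (h1 : 1 ∈ G.regDom m) : G.regDom m = {u | G.FiniteEnergy u ∧ MemL2 m u} := by
  refine Subset.antisymm (fun u hu => ⟨hu.1, hu.2.1⟩) fun u ⟨hu, huL2⟩ => ?_
  have huE := (finiteEnergy_iff_of_c_eq_zero hc).1 hu
  let φ : ℕ → ℝ → ℝ := fun k a => projIcc (-k : ℝ) k (neg_le_self k.cast_nonneg) a
  have hφ_lip : ∀ k a b, |φ k a - φ k b| ≤ |a - b| := fun k a b => abs_projIcc_sub_projIcc _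
  have hφ_sub_lip : ∀ k a b, |(a - φ k a) - (b - φ k b)| ≤ |a - b| := fun k =>
    abs_sub_sub_sub_le_of_monotone (fun a b hab => monotone_projIcc _ hab) (hφ_lip k)
  have hφ_eq : ∀ a, ∀ᶠ k in atTop, φ k a = a := fun a => by
    filter_upwards [eventually_ge_atTop ⌈|a|⌉₊] with k hk
    have hk' : |a| ≤ k := (Nat.le_ceil _).trans (Nat.cast_le.2 hk)
    simp [φ, projIcc_of_mem _ (abs_le.1 hk')]
  have htrunc : ∀ k, (fun x => φ k (u x)) ∈ G.regDom m := fun k =>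
    mem_regDom_of_abs_le hc hm h1 (M := k) (fun x => abs_le.2 (projIcc _ _ _ (u x)).2)
      ((finiteEnergy_iff_of_c_eq_zero hc).2 (ne_top_of_le_ne_top huE
        (edgeEnergy_mono fun x y => hφ_lip k _ _)))
      (memL2_of_abs_le (fun x => (hm x).le) huL2 fun x => abs_projIcc_le _
        (neg_nonpos.2 k.cast_nonneg) k.cast_nonneg _)
  have hpt : ∀ x, Tendsto (fun k => u x - φ k (u x)) atTop (𝓝 0) := fun x =>
    tendsto_const_nhds.congr' <| (hφ_eq (u x)).mono fun k hk => by simp [hk]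
  refine mem_regDom_of_tendsto hc (fun x => (hm x).le) hu huL2 htrunc
    (tendsto_formNormSq_zero hc
      (tendsto_edgeEnergy_zero_of_dominated huE (fun k x y => hφ_sub_lip k _ _) hpt)
      (tendsto_tsum_sq_mul_of_dominated (fun x => (hm x).le) huL2 (fun k x => ?_) hpt))
  have hφ0 : φ k 0 = 0 := by
    simp [φ, projIcc_of_mem _ ⟨neg_nonpos.2 (Nat.cast_nonneg (α := ℝ) k), Nat.cast_nonneg k⟩]
  simpa [hφ0] using hφ_sub_lip k (u x) 0

theorem energyBilin_comm (u v : V → ℝ) : G.energyBilin u v = G.energyBilin v u := by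
  have hb : ∀ p : V × V, G.b p.1 p.2 * (u p.1 - u p.2) * (v p.1 - v p.2)
      = G.b p.1 p.2 * (v p.1 - v p.2) * (u p.1 - u p.2) := fun p => by ring
  have hcx : ∀ x, G.c x * u x * v x = G.c x * v x * u x := fun x => by ring
  simp only [energyBilin, hb, hcx]

theorem energyBilin_one_sub_nonpos (hc : ∀ x, G.c x = 0) (w : V → ℝ) :
    G.energyBilin w (1 - w) ≤ 0 := by
  have h : ∀ p : V × V, G.b p.1 p.2 * (w p.1 - w p.2) * ((1 - w) p.1 - (1 - w) p.2)
      = -(G.b p.1 p.2 * (w p.1 - w p.2) ^ 2) := fun p => by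
    simp only [Pi.sub_apply, Pi.one_apply]
    ring
  simp only [energyBilin, hc, zero_mul, tsum_zero, add_zero, h, tsum_neg]
  have : 0 ≤ ∑' p : V × V, G.b p.1 p.2 * (w p.1 - w p.2) ^ 2 :=
    tsum_nonneg fun p => mul_nonneg (G.b_nonneg p.1 p.2) (sq_nonneg _)
  linarith

end WeightedGraph

namespace FormSetup

open scoped Classical

variable {V : Type*} {G : WeightedGraph V} {m : V → ℝ} (S : FormSetup G m)

theorem R_symm {α : ℝ} (hα : 0 < α) {f g : V → ℝ} (hf : MemL2 m f) (hg : MemL2 m g) :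
    l2inner m (S.R α f) g = l2inner m f (S.R α g) := by
  have h1 := S.R_char α hα f hf (S.R α g) (S.R_mem α hα g hg)
  have h2 := S.R_char α hα g hg (S.R α f) (S.R_mem α hα f hf)
  rw [G.energyBilin_comm, l2inner_comm (S.R α g)] at h2
  rw [l2inner_comm]
  linarith

theorem R_apply_mul {α : ℝ} (hα : 0 < α) {f : V → ℝ} (hf : MemL2 m f) (x : V) :
    S.R α f x * m x = ∑' z, f z * S.R α (Pi.single x 1) z * m z := by
  rw [← l2inner_single_right, S.R_symm hα hf (memL2_single x), l2inner]

theorem stochComplete_iff_R_one_eq_one (hm : ∀ x, 0 < m x) (hfin : Summable m) :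
    S.StochComplete ↔ ∀ x, S.R 1 1 x = 1 := by
  refine ⟨fun h x => tendsto_nhds_unique tendsto_const_nhds <| h (fun _ => 1)
    (fun _ => memL2_one hfin) (fun _ _ => ⟨zero_le_one, le_rfl, le_rfl⟩)
    (fun _ => tendsto_const_nhds) x, fun hR f hfL2 hf hlim x => ?_⟩
  have hRδ := S.dom_l2 _ (S.R_mem 1 one_pos _ (memL2_single (m := m) x))
  have key : Tendsto (fun n => S.R 1 (f n) x * m x) atTop (𝓝 (S.R 1 1 x * m x)) := by
    simp_rw [S.R_apply_mul one_pos (hfL2 _), S.R_apply_mul one_pos (memL2_one hfin)]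
    refine tendsto_tsum_of_dominated_convergence (hRδ.summable_abs_mul (fun z => (hm z).le) hfin)
      (fun z => ((hlim z).mul_const _).mul_const _) (.of_forall fun n z => ?_)
    rw [Real.norm_eq_abs, abs_mul, abs_mul, abs_of_nonneg (hm z).le,
      abs_of_nonneg (hf n z).1, mul_assoc]
    exact mul_le_of_le_one_left (mul_nonneg (abs_nonneg _) (hm z).le) (hf n z).2.2
  rw [hR x, one_mul] at key
  simpa [(hm x).ne'] using key.div_const (m x)

theorem R_one_le_inv (hfin : Summable m) {α : ℝ} (hα : 0 < α) (y : V) : S.R α 1 y ≤ α⁻¹ := by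
  rw [← ENNReal.ofReal_le_ofReal_iff (inv_nonneg.2 hα.le), ← lintegral_exp_neg_mul_Ioi hα,
    S.R_laplace α hα 1 (memL2_one hfin) (fun _ => zero_le_one) y]
  exact setLIntegral_mono' measurableSet_Ioi fun t ht => ENNReal.ofReal_le_ofReal <|
    mul_le_of_le_one_right (exp_pos _).le (S.T_markov t ht 1 (fun _ => ⟨zero_le_one, le_rfl⟩) y).2

theorem T_one_eq_one (hfin : Summable m) (hR : ∀ y, S.R 1 1 y = 1) {t : ℝ} (ht : 0 < t)
    (y : V) : S.T t 1 y = 1 :=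
  eqOn_one_of_lintegral_exp_neg_mul_eq one_pos (S.T_cont 1 (memL2_one hfin) y)
    (fun t ht => S.T_pos t ht 1 (fun _ => zero_le_one) y)
    (fun t ht => (S.T_markov t ht 1 (fun _ => ⟨zero_le_one, le_rfl⟩) y).2)
    (by rw [← S.R_laplace 1 one_pos 1 (memL2_one hfin) (fun _ => zero_le_one) y, hR y, inv_one])
    ht

theorem green_eq (x y : V) :
    S.green x y = ∫⁻ t in Ioi 0, ENNReal.ofReal (S.T t (Pi.single x 1) y) := by
  rw [green]
  congr! 5 with t z
  exact (Pi.single_apply x 1 z).symm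

theorem div_tsum_le_T_single_self (hm : ∀ x, 0 < m x) (hfin : Summable m)
    (hT1 : ∀ t > 0, ∀ y, S.T t 1 y = 1) {s : ℝ} (hs : 0 < s) (x : V) :
    m x / ∑' z, m z ≤ S.T (s + s) (Pi.single x 1) x := by
  have hm0 : ∀ z, 0 ≤ m z := fun z => (hm z).le
  have hδ : MemL2 m (Pi.single x (1 : ℝ)) := memL2_single x
  set a := S.T s (Pi.single x 1)
  have ha : MemL2 m a := S.T_l2 s hs _ hδ
  have h1 : ∑' z, a z * m z = m x := by
    have h := S.T_symm s hs _ 1 hδ (memL2_one hfin)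
    rw [l2inner_comm _ (S.T s 1), l2inner_single_right, hT1 s hs] at h
    simpa [l2inner] using h
  have h2 : ∑' z, a z ^ 2 * m z = S.T (s + s) (Pi.single x 1) x * m x := by
    have h := S.T_symm s hs _ a hδ ha
    rw [l2inner_comm _ (S.T s a), l2inner_single_right, ← S.T_semigroup s s hs hs] at h
    simpa [l2inner, sq] using h
  have hM : 0 < ∑' z, m z := hfin.tsum_pos hm0 x (hm x)
  have hcs := tsum_mul_sq_le hm0 hfin ha
  rw [h1, h2] at hcs
  rw [div_le_iff₀ hM]
  nlinarith [hm x]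

theorem T_single_mul_le {s t : ℝ} (hs : 0 < s) (ht : 0 < t) (x y : V) :
    S.T s (Pi.single x 1) y * S.T t (Pi.single y 1) y ≤ S.T (t + s) (Pi.single x 1) y := by
  set c := S.T s (Pi.single x 1) y
  have hge : ∀ z, 0 ≤ (S.T s (Pi.single x 1) - c • Pi.single y 1 : V → ℝ) z := fun z => by
    rcases eq_or_ne z y with rfl | hz
    · simp [c]
    · simpa [hz] using S.T_pos s hs _ (Pi.single_nonneg.2 zero_le_one : (0 : V → ℝ) ≤ _) z
  have h := S.T_pos t ht _ hge y
  rw [(S.T_linear t).map_sub, (S.T_linear t).map_smul, ← S.T_semigroup t s ht hs] at h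
  simpa [mul_comm c] using h

theorem green_eq_top (hm : ∀ x, 0 < m x) (hfin : Summable m)
    (hpi : ∀ t : ℝ, 0 < t → ∀ f : V → ℝ, MemL2 m f → (∀ x, 0 ≤ f x) → f ≠ 0 →
      ∀ y, 0 < S.T t f y)
    (hT1 : ∀ t > 0, ∀ y, S.T t 1 y = 1) (x y : V) : S.green x y = ⊤ := by
  have hTxy : 0 < S.T 1 (Pi.single x 1) y := hpi 1 one_pos _ (memL2_single x)
    (Pi.single_nonneg.2 zero_le_one : (0 : V → ℝ) ≤ _) (fun h => by simpa using congrFun h x) y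
  set c := S.T 1 (Pi.single x 1) y * (m y / ∑' z, m z)
  have hc : 0 < c := by
    have hM : 0 < ∑' z, m z := hfin.tsum_pos (fun z => (hm z).le) y (hm y)
    exact mul_pos hTxy (div_pos (hm y) hM)
  have hlow : ∀ t > 1, c ≤ S.T t (Pi.single x 1) y := by
    intro t ht
    set r := (t - 1) / 2
    have hr : 0 < r := by simp only [r]; linarith
    calc c ≤ S.T 1 (Pi.single x 1) y * S.T (r + r) (Pi.single y 1) y :=
          mul_le_mul_of_nonneg_left (S.div_tsum_le_T_single_self hm hfin hT1 hr y) hTxy.le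
      _ ≤ S.T (r + r + 1) (Pi.single x 1) y := S.T_single_mul_le one_pos (by positivity) x y
      _ = S.T t (Pi.single x 1) y := by congr 1; simp only [r]; ring
  refine top_le_iff.1 ?_
  calc ⊤ = ∫⁻ _ in Ioi 1, ENNReal.ofReal c := by
        rw [setLIntegral_const, volume_Ioi, ENNReal.mul_top (ENNReal.ofReal_pos.2 hc).ne']
    _ ≤ ∫⁻ t in Ioi 1, ENNReal.ofReal (S.T t (Pi.single x 1) y) :=
        setLIntegral_mono' measurableSet_Ioi fun t ht => ENNReal.ofReal_le_ofReal (hlow t ht)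
    _ ≤ S.green x y := S.green_eq x y ▸ lintegral_mono_set (Ioi_subset_Ioi zero_le_one)

theorem one_sub_R_one_mul_R_single_le (hm : ∀ x, 0 < m x) (hfin : Summable m) {α : ℝ}
    (hα : 0 < α) (y : V) : (1 - S.R 1 1 y) * S.R α (Pi.single y 1) y ≤ 1 := by
  have hm0 : ∀ z, 0 ≤ m z := fun z => (hm z).le
  have h1 : MemL2 m (1 : V → ℝ) := memL2_one hfin
  have hδ : MemL2 m (Pi.single y (1 : ℝ)) := memL2_single y
  set w := S.R 1 1
  set r := S.R α (Pi.single y 1)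
  have hw : w ∈ S.dom := S.R_mem 1 one_pos 1 h1
  have hr : r ∈ S.dom := S.R_mem α hα _ hδ
  have hw0 : ∀ z, 0 ≤ w z := S.R_pos 1 one_pos 1 fun _ => zero_le_one
  have hw1 : ∀ z, w z ≤ 1 := fun z => by simpa using S.R_one_le_inv hfin one_pos z
  have hr0 : ∀ z, 0 ≤ r z :=
    S.R_pos α hα _ (Pi.single_nonneg.2 zero_le_one : (0 : V → ℝ) ≤ _)
  have hwL2 := S.dom_l2 w hw
  have hrL2 := S.dom_l2 r hr
  have hw_char := S.R_char 1 one_pos 1 h1 r hr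
  have hr_char := S.R_char α hα _ hδ w hw
  rw [l2inner_comm (Pi.single y 1), l2inner_single_right, G.energyBilin_comm] at hr_char
  -- `⟨1 - w, r⟩ = Q(w, r) = w(y) m(y) - α ⟨r, w⟩ ≤ m(y)`
  have hinner : l2inner m (1 - w) r ≤ m y := by
    have hsub : l2inner m (1 - w) r = l2inner m 1 r - l2inner m w r := by
      simp only [l2inner, Pi.sub_apply, sub_mul]
      exact (h1.summable_mul hm0 hrL2).tsum_sub (hwL2.summable_mul hm0 hrL2)
    have hrw : 0 ≤ l2inner m r w :=
      tsum_nonneg fun z => mul_nonneg (mul_nonneg (hr0 z) (hw0 z)) (hm0 z)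
    have hwy : w y * m y ≤ m y := mul_le_of_le_one_left (hm0 y) (hw1 y)
    linarith [mul_nonneg hα.le hrw]
  have hterm : (1 - w y) * r y * m y ≤ l2inner m (1 - w) r :=
    ((h1.sub hm0 hwL2).summable_mul hm0 hrL2).le_tsum y fun z _ =>
      mul_nonneg (mul_nonneg (sub_nonneg.2 (hw1 z)) (hr0 z)) (hm0 z)
  exact le_of_mul_le_mul_right (by linarith) (hm y)

theorem R_one_eq_one_of_green_self_eq_top (hm : ∀ x, 0 < m x) (hfin : Summable m) {y : V}
    (hy : S.green y y = ⊤) : S.R 1 1 y = 1 := by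
  refine (S.R_one_le_inv hfin one_pos y).trans_eq inv_one |>.eq_of_not_lt fun hlt => ?_
  have hpos : 0 < 1 - S.R 1 1 y := sub_pos.2 hlt
  have hδ : MemL2 m (Pi.single y (1 : ℝ)) := memL2_single y
  have hbound : S.green y y ≤ ENNReal.ofReal (1 - S.R 1 1 y)⁻¹ := by
    rw [green_eq]
    refine lintegral_le_of_lintegral_exp_neg_mul_le (S.T_cont _ hδ y) fun α hα => ?_
    rw [← S.R_laplace α hα _ hδ (Pi.single_nonneg.2 zero_le_one : (0 : V → ℝ) ≤ _) y]
    refine ENNReal.ofReal_le_ofReal ?_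
    rw [← one_div, le_div_iff₀ hpos, mul_comm]
    exact S.one_sub_R_one_mul_R_single_le hm hfin hα y
  exact ENNReal.ofReal_ne_top (top_le_iff.1 (hy ▸ hbound))

theorem R_one_eq_one_of_regDom_eq (hc : ∀ x, G.c x = 0) (hm : ∀ x, 0 < m x)
    (hfin : Summable m) (hdom : S.dom = G.regDom m)
    (hC : G.regDom m = {u | G.FiniteEnergy u ∧ MemL2 m u}) (y : V) : S.R 1 1 y = 1 := by
  have hm0 : ∀ z, 0 ≤ m z := fun z => (hm z).le
  have h1 : MemL2 m (1 : V → ℝ) := memL2_one hfin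
  set w := S.R 1 1
  have hw : w ∈ S.dom := S.R_mem 1 one_pos 1 h1
  have hwL2 := S.dom_l2 w hw
  have hvL2 : MemL2 m (1 - w) := h1.sub hm0 hwL2
  have hv : 1 - w ∈ S.dom := by
    rw [hdom, hC]
    refine ⟨(WeightedGraph.finiteEnergy_iff_of_c_eq_zero hc).2 ?_, hvL2⟩
    rw [show (1 : V → ℝ) - w = fun x => 1 - w x from rfl, WeightedGraph.edgeEnergy_const_sub]
    exact (WeightedGraph.finiteEnergy_iff_of_c_eq_zero hc).1 (S.dom_fe w hw)
  -- `‖1 - w‖² = ⟨1, 1 - w⟩ - ⟨w, 1 - w⟩ = Q(w, 1 - w) ≤ 0`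
  have hchar := S.R_char 1 one_pos 1 h1 (1 - w) hv
  have hnorm : ∑' x, (1 - w) x ^ 2 * m x ≤ 0 := by
    have hsub : ∑' x, (1 - w) x ^ 2 * m x = l2inner m 1 (1 - w) - l2inner m w (1 - w) := by
      rw [l2inner, l2inner, ← (h1.summable_mul hm0 hvL2).tsum_sub (hwL2.summable_mul hm0 hvL2)]
      congr 1 with x
      simp only [Pi.sub_apply, Pi.one_apply]
      ring
    linarith [G.energyBilin_one_sub_nonpos hc w]
  have hy : (1 - w) y ^ 2 * m y ≤ 0 :=
    (hvL2.le_tsum y fun z _ => mul_nonneg (sq_nonneg _) (hm0 z)).trans hnorm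
  have : (1 - w) y = 0 := pow_eq_zero_iff two_ne_zero |>.1 <|
    le_antisymm (nonpos_of_mul_nonpos_left hy (hm y)) (sq_nonneg _)
  rw [Pi.sub_apply, Pi.one_apply, sub_eq_zero] at this
  exact this.symm

end FormSetup

end

theorem finite_measure_equivalences_general {V : Type*} (G : WeightedGraph V)
    (m : V → ℝ) (hm : ∀ x, 0 < m x) (hfin : Summable fun x => m x)
    (hc : ∀ x, G.c x = 0)
    (S : FormSetup G m) (hdom : S.dom = G.regDom m)
    (hpi : ∀ t : ℝ, 0 < t → ∀ f : V → ℝ, MemL2 m f → (∀ x, 0 ≤ f x) → f ≠ 0 →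
      ∀ y, 0 < S.T t f y) :
    ((∀ x y, S.green x y = ⊤) ↔ S.StochComplete) ∧
    ((∀ x y, S.green x y = ⊤) ↔ G.regDom m = {u | G.FiniteEnergy u ∧ MemL2 m u}) := by
  have hrec : (∀ x y, S.green x y = ⊤) ↔ ∀ y, S.R 1 1 y = 1 :=
    ⟨fun h y => S.R_one_eq_one_of_green_self_eq_top hm hfin (h y y),
      fun h => S.green_eq_top hm hfin hpi fun t ht => S.T_one_eq_one hfin h ht⟩
  have hneu : G.regDom m = {u | G.FiniteEnergy u ∧ MemL2 m u} ↔ ∀ y, S.R 1 1 y = 1 := by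
    refine ⟨S.R_one_eq_one_of_regDom_eq hc hm hfin hdom, fun h => ?_⟩
    have h1 := S.R_mem 1 one_pos 1 (memL2_one hfin)
    rw [hdom, funext h] at h1
    exact G.regDom_eq_of_one_mem hc hm h1
  exact ⟨hrec.trans (S.stochComplete_iff_R_one_eq_one hm hfin).symm, hrec.trans hneu.symm⟩

/-- for `(b,0)` connected with finite measure `m(V) < ∞`, recurrence,
stochastic completeness and `Q^(D) = Q^(N)` are all equivalent. -/
theorem finite_measure_equivalences {V : Type*} [Countable V] (G : WeightedGraph V)
    (m : V → ℝ) (hm : ∀ x, 0 < m x) (hfin : Summable fun x => m x)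
    (hconn : G.Connected) (hc : ∀ x, G.c x = 0)
    (S : FormSetup G m) (hdom : S.dom = G.regDom m)
    (hpi : ∀ t : ℝ, 0 < t → ∀ f : V → ℝ, MemL2 m f → (∀ x, 0 ≤ f x) → f ≠ 0 →
      ∀ y, 0 < S.T t f y) :
    ((∀ x y, S.green x y = ⊤) ↔ S.StochComplete) ∧
    ((∀ x y, S.green x y = ⊤) ↔ G.regDom m = {u | G.FiniteEnergy u ∧ MemL2 m u}) :=
  finite_measure_equivalences_general G m hm hfin hc S hdom hpi
end
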